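/- arXiv:2604.12771 — 3 statements merged into one kernel-verified Lean document; each statement's English description precedes it below -/
import Mathlib

section
/- Let p ≥ 2, let Σ be a positive definite p×p matrix, and let X = Σ^{1/2} u R, where u is uniformly distributed on the unit sphere S^{p−1} ⊂ ℝ^p and R ≥ 0 is a real random variable independent of u with E[R²] = p and E[R⁴] < ∞. Then for all symmetric p×p matrices A and B: (1/4)·Cov(XᵀAX, XᵀBX) = (1/2)·tr(ΣAΣB) + (E[R⁴]/(p(p+2)) − 1)·[(1/2)·tr(ΣAΣB) + (1/4)·tr(ΣA)·tr(ΣB)]. (Equivalently, the score covariance matrix C△ = (1/4)Cov(vec(XXᵀ)) of the Gaussian loss agrees, as a bilinear form on vectorized symmetric matrices, with C + (E[R⁴]/(p(p+2)) − 1)·(C + (1/4)vec(Σ)vec(Σ)ᵀ), where C = (1/2)(Σ⊗Σ).) -/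
/-
Writing `X = R • S u` with `S = Σ^{1/2}`, every quadratic form `Xᵀ P X` equals
`R² · uᵀ (S P S) u`, so independence of `R` and `u` reduces the statement to the second and
fourth moments of `u`. Invariance of the law of `u` under a coordinate reflection kills every
moment in which some coordinate occurs to an odd power, invariance under permutations makes
`E[u_i⁴]` independent of `i`, and invariance under the 45° rotation in the `(i, k)`-plane gives
`E[u_i⁴] = 3 E[u_i² u_k²]`. Together with `∑ u_i² = 1` this yields `E[u_i u_j] = δ_ij / p` and
`E[u_i u_j u_k u_l] = (δ_ij δ_kl + δ_ik δ_jl + δ_il δ_jk) / (p (p + 2))`; the covariance formula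
is then a trace computation.
-/

open MeasureTheory ProbabilityTheory Matrix
open scoped MatrixOrder

namespace Matrix

variable {n R : Type*} [Fintype n] [DecidableEq n] [CommRing R]

theorem diagonal_mem_orthogonalGroup {d : n → R} (hd : ∀ i, d i * d i = 1) :
    diagonal d ∈ orthogonalGroup n R := by
  rw [mem_orthogonalGroup_iff, diagonal_transpose, diagonal_mul_diagonal, diagonal_eq_one]
  exact funext hd

theorem permMatrix_mem_orthogonalGroup (σ : Equiv.Perm n) :
    σ.permMatrix R ∈ orthogonalGroup n R := by
  rw [mem_orthogonalGroup_iff, transpose_permMatrix, ← permMatrix_mul, inv_mul_cancel,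
    permMatrix_one]

def givensRotation (a b : n) (c s : R) : Matrix n n R :=
  1 + (c - 1) • (single a a 1 + single b b 1) + s • (single a b 1 - single b a 1)

theorem givensRotation_mem_orthogonalGroup {a b : n} (hab : a ≠ b) {c s : R}
    (hcs : c ^ 2 + s ^ 2 = 1) : givensRotation a b c s ∈ orthogonalGroup n R := by
  rw [mem_orthogonalGroup_iff, givensRotation]
  set P : Matrix n n R := single a a 1 + single b b 1
  set J : Matrix n n R := single a b 1 - single b a 1
  have hPt : Pᵀ = P := by simp [P]
  have hJt : Jᵀ = -J := by simp [J]
  have hPP : P * P = P := by simp [P, add_mul, mul_add, hab, hab.symm]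
  have hPJ : P * J = J := by simp [P, J, add_mul, mul_sub, hab, hab.symm]
  have hJP : J * P = J := by simp [P, J, sub_mul, mul_add, hab, hab.symm]; abel
  have hJJ : J * J = -P := by simp [P, J, sub_mul, mul_sub, hab, hab.symm]; abel
  simp only [transpose_add, transpose_smul, transpose_one, hPt, hJt, add_mul, mul_add,
    smul_mul_smul, mul_smul, one_mul, mul_one, hPP, hPJ, hJP, hJJ, smul_neg, mul_neg]
  linear_combination (norm := module) hcs • P

theorem givensRotation_mulVec_apply_left {a b : n} (hab : a ≠ b) (c s : R) (x : n → R) :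
    (givensRotation a b c s *ᵥ x) a = c * x a + s * x b := by
  simp [givensRotation, add_mulVec, sub_mulVec, smul_mulVec, single_mulVec, hab]
  ring

def coordReflection (a : n) : Matrix n n R := diagonal (Function.update 1 a (-1))

theorem coordReflection_mem_orthogonalGroup (a : n) :
    coordReflection (R := R) a ∈ orthogonalGroup n R :=
  diagonal_mem_orthogonalGroup fun i => by
    rcases eq_or_ne i a with rfl | h <;> simp [*]

theorem coordReflection_mulVec (a : n) (x : n → R) :
    coordReflection a *ᵥ x = Function.update x a (-x a) := by
  ext i
  rcases eq_or_ne i a with rfl | h <;> simp [coordReflection, mulVec_diagonal, *]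

end Matrix

theorem Matrix.dotProduct_mulVec_self {ι R : Type*} [Fintype ι] [CommSemiring R]
    (M : Matrix ι ι R) (x : ι → R) : x ⬝ᵥ M *ᵥ x = ∑ i, ∑ j, M i j * (x i * x j) := by
  simp only [dotProduct, mulVec, Finset.mul_sum]
  exact Finset.sum_congr rfl fun i _ => Finset.sum_congr rfl fun j _ => by ring

theorem integral_dotProduct_mulVec_mul {ι : Type*} [Fintype ι] {μ : Measure (ι → ℝ)}
    (M : Matrix ι ι ℝ) {f : (ι → ℝ) → ℝ} (hf : ∀ i j, Integrable (fun x => x i * x j * f x) μ) :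
    ∫ x, (x ⬝ᵥ M *ᵥ x) * f x ∂μ = ∑ i, ∑ j, M i j * ∫ x, x i * x j * f x ∂μ := by
  have hexp (x : ι → ℝ) :
      (x ⬝ᵥ M *ᵥ x) * f x = ∑ i, ∑ j, M i j * (x i * x j * f x) := by
    simp only [dotProduct_mulVec_self, Finset.sum_mul, mul_assoc]
  simp only [hexp]
  rw [integral_finsetSum (f := fun i x => ∑ j, M i j * (x i * x j * f x)) _
    fun i _ => integrable_finsetSum _ fun j _ => (hf i j).const_mul _]
  refine Finset.sum_congr rfl fun i _ => ?_
  rw [integral_finsetSum _ fun j _ => (hf i j).const_mul _]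
  exact Finset.sum_congr rfl fun j _ => integral_const_mul _ _

section InvariantMeasure

variable {p : ℕ} {ν : Measure (Fin p → ℝ)}

theorem integral_comp_mulVec_of_map_eq {O : Matrix (Fin p) (Fin p) ℝ}
    (hO : ν.map (O *ᵥ ·) = ν) {g : (Fin p → ℝ) → ℝ} (hg : AEStronglyMeasurable g ν) :
    ∫ x, g (O *ᵥ x) ∂ν = ∫ x, g x ∂ν := by
  rw [← integral_map (by fun_prop) (hO.symm ▸ hg), hO]

theorem integral_eq_zero_of_comp_mulVec_eq_neg {O : Matrix (Fin p) (Fin p) ℝ}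
    (hO : ν.map (O *ᵥ ·) = ν) {g : (Fin p → ℝ) → ℝ} (hg : AEStronglyMeasurable g ν)
    (hodd : ∀ x, g (O *ᵥ x) = -g x) : ∫ x, g x ∂ν = 0 := by
  have h := integral_comp_mulVec_of_map_eq hO hg
  simp only [hodd, integral_neg] at h
  linarith

theorem abs_le_one_of_sum_sq_eq_one {ι : Type*} [Fintype ι] {x : ι → ℝ}
    (hx : ∑ i, x i ^ 2 = 1) (i : ι) : |x i| ≤ 1 := by
  rw [← sq_le_one_iff_abs_le_one, ← hx]
  exact Finset.single_le_sum (f := fun t => x t ^ 2) (fun t _ => sq_nonneg _) (Finset.mem_univ i)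

theorem isCompact_setOf_sum_sq_eq_one :
    IsCompact {x : Fin p → ℝ | ∑ i, x i ^ 2 = 1} := by
  refine Metric.isCompact_of_isClosed_isBounded (isClosed_eq (by fun_prop) continuous_const) ?_
  refine (Metric.isBounded_closedBall (x := 0) (r := 1)).subset fun x hx => ?_
  rw [mem_closedBall_zero_iff, pi_norm_le_iff_of_nonneg zero_le_one]
  exact abs_le_one_of_sum_sq_eq_one hx

theorem Continuous.integrable_of_ae_mem_isCompact {X E : Type*} [TopologicalSpace X]
    [T2Space X] [MeasurableSpace X] [OpensMeasurableSpace X] [NormedAddCommGroup E]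
    {μ : Measure X} [IsFiniteMeasure μ] {K : Set X} (hK : IsCompact K) (hμ : ∀ᵐ x ∂μ, x ∈ K)
    {g : X → E} (hg : Continuous g) : Integrable g μ := by
  rw [← Measure.restrict_eq_self_of_ae_mem hμ]
  exact hg.continuousOn.integrableOn_compact hK

variable (hinv : ∀ O ∈ orthogonalGroup (Fin p) ℝ, ν.map (O *ᵥ ·) = ν)

include hinv in
theorem integral_comp_perm (σ : Equiv.Perm (Fin p)) {g : (Fin p → ℝ) → ℝ}
    (hg : AEStronglyMeasurable g ν) : ∫ x, g (x ∘ σ) ∂ν = ∫ x, g x ∂ν := by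
  simp only [← permMatrix_mulVec]
  exact integral_comp_mulVec_of_map_eq (hinv _ (permMatrix_mem_orthogonalGroup σ)) hg

include hinv in
theorem integral_comp_coord_eq (i j : Fin p) {f : ℝ → ℝ} (hf : Measurable f) :
    ∫ x, f (x i) ∂ν = ∫ x, f (x j) ∂ν := by
  simpa using integral_comp_perm hinv (Equiv.swap i j) (g := fun x => f (x j))
    ((hf.comp (measurable_pi_apply j)).aestronglyMeasurable)

include hinv in
theorem integral_coord_mul_eq_zero (a : Fin p) {f : (Fin p → ℝ) → ℝ}
    (hf : Continuous f) (hfa : ∀ x, f (Function.update x a (-x a)) = f x) :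
    ∫ x, x a * f x ∂ν = 0 :=
  integral_eq_zero_of_comp_mulVec_eq_neg (hinv _ (coordReflection_mem_orthogonalGroup a))
    (by fun_prop : Continuous fun x : Fin p → ℝ => x a * f x).aestronglyMeasurable fun x => by
      simp [coordReflection_mulVec, hfa]

include hinv in
theorem integral_coord_mul_coord_of_ne {i j : Fin p} (hij : i ≠ j) :
    ∫ x, x i * x j ∂ν = 0 :=
  integral_coord_mul_eq_zero hinv i (by fun_prop) fun x => by simp [hij.symm]

variable [IsProbabilityMeasure ν] (hsphere : ∀ᵐ x ∂ν, ∑ i, x i ^ 2 = 1)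

include hsphere in
theorem ne_zero_of_ae_sum_sq_eq_one : p ≠ 0 := by
  rintro rfl
  simp only [Finset.univ_eq_empty, Finset.sum_empty, zero_ne_one,
    Filter.eventually_false_iff_eq_bot, ae_eq_bot] at hsphere
  exact IsProbabilityMeasure.ne_zero ν hsphere

include hsphere in
theorem Continuous.integrable_of_ae_sum_sq_eq_one {g : (Fin p → ℝ) → ℝ} (hg : Continuous g) :
    Integrable g ν :=
  hg.integrable_of_ae_mem_isCompact isCompact_setOf_sum_sq_eq_one hsphere

include hinv hsphere in
theorem integral_coord_sq (i : Fin p) : ∫ x, x i ^ 2 ∂ν = 1 / p := by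
  apply eq_one_div_of_mul_eq_one_right
  have hsum : ∑ j, ∫ x, x j ^ 2 ∂ν = 1 := by
    rw [← integral_finsetSum _ fun j _ => (by fun_prop : Continuous fun x : Fin p → ℝ => x j ^ 2)
      |>.integrable_of_ae_sum_sq_eq_one hsphere, integral_congr_ae hsphere]
    simp
  rw [Finset.sum_congr rfl fun j _ => integral_comp_coord_eq hinv j i (f := (· ^ 2)) (by fun_prop)]
    at hsum
  simpa using hsum

include hinv hsphere in
theorem integral_coord_pow_four_eq_three_mul {i k : Fin p} (hik : i ≠ k) :
    ∫ x, x i ^ 4 ∂ν = 3 * ∫ x, x i ^ 2 * x k ^ 2 ∂ν := by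
  have hc2 : √2⁻¹ ^ 2 = (2⁻¹ : ℝ) := Real.sq_sqrt (by norm_num)
  have hG := givensRotation_mem_orthogonalGroup hik (c := √2⁻¹) (s := √2⁻¹) (by rw [hc2]; norm_num)
  have hrot := integral_comp_mulVec_of_map_eq (hinv _ hG) (g := fun x => x i ^ 4)
    (by fun_prop : Continuous fun x : Fin p → ℝ => x i ^ 4).aestronglyMeasurable
  have hexpand : ∀ x : Fin p → ℝ, (√2⁻¹ * x i + √2⁻¹ * x k) ^ 4
      = (x i ^ 4 + x k ^ 4 + 6 * (x i ^ 2 * x k ^ 2)) / 4 + x i * (x k * (x i ^ 2 + x k ^ 2)) := by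
    intro x
    rw [← mul_add, mul_pow, show √2⁻¹ ^ 4 = (√2⁻¹ ^ 2) ^ 2 by ring, hc2]
    ring
  have hodd : ∫ x, x i * (x k * (x i ^ 2 + x k ^ 2)) ∂ν = 0 :=
    integral_coord_mul_eq_zero hinv i (by fun_prop) fun x => by simp [hik.symm]
  have hint {g : (Fin p → ℝ) → ℝ} (hg : Continuous g) : Integrable g ν :=
    hg.integrable_of_ae_sum_sq_eq_one hsphere
  simp only [givensRotation_mulVec_apply_left hik, hexpand] at hrot
  rw [integral_add (hint (by fun_prop)) (hint (by fun_prop)), integral_div,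
    integral_add (hint (by fun_prop)) (hint (by fun_prop)),
    integral_add (hint (by fun_prop)) (hint (by fun_prop)), integral_const_mul, hodd,
    integral_comp_coord_eq hinv k i (f := (· ^ 4)) (by fun_prop)] at hrot
  linarith

include hinv hsphere in
theorem integral_coord_pow_four (i : Fin p) : ∫ x, x i ^ 4 ∂ν = 3 / (p * (p + 2)) := by
  set m := ∫ x, x i ^ 4 ∂ν
  have hpair (j k : Fin p) :
      ∫ x, x j ^ 2 * x k ^ 2 ∂ν = m / 3 + if j = k then 2 * m / 3 else 0 := by
    have hj : ∫ x, x j ^ 4 ∂ν = m := integral_comp_coord_eq hinv j i (f := (· ^ 4)) (by fun_prop)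
    rcases eq_or_ne j k with rfl | hjk
    · simp only [← pow_add, if_true, hj]
      ring
    · rw [if_neg hjk, ← hj, integral_coord_pow_four_eq_three_mul hinv hsphere hjk]
      ring
  have hsum : ∑ j, ∑ k, ∫ x, x j ^ 2 * x k ^ 2 ∂ν = 1 := by
    have hint {g : (Fin p → ℝ) → ℝ} (hg : Continuous g) : Integrable g ν :=
      hg.integrable_of_ae_sum_sq_eq_one hsphere
    have hrow (j : Fin p) : ∑ k, ∫ x, x j ^ 2 * x k ^ 2 ∂ν = ∫ x, ∑ k, x j ^ 2 * x k ^ 2 ∂ν :=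
      (integral_finsetSum _ fun _ _ => hint (by fun_prop)).symm
    simp only [hrow]
    rw [← integral_finsetSum _ fun _ _ => hint (by fun_prop)]
    rw [integral_congr_ae (g := fun _ => 1) (hsphere.mono fun x hx => by
      simp only [← Finset.sum_mul_sum, hx, one_mul])]
    simp
  simp only [hpair, Finset.sum_add_distrib, Finset.sum_const, Finset.card_univ, Fintype.card_fin,
    nsmul_eq_mul, Finset.sum_ite_eq, Finset.mem_univ, if_true] at hsum
  have h3 : m * (p * (p + 2)) = 3 := by linear_combination 3 * hsum
  exact eq_div_of_mul_eq (fun h => by simp [h] at h3) h3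

include hinv hsphere in
theorem integral_coord_sq_mul_coord_sq {i k : Fin p} (hik : i ≠ k) :
    ∫ x, x i ^ 2 * x k ^ 2 ∂ν = 1 / (p * (p + 2)) := by
  have h := integral_coord_pow_four_eq_three_mul hinv hsphere hik
  rw [integral_coord_pow_four hinv hsphere] at h
  linarith [mul_one_div (3 : ℝ) (p * (p + 2))]

include hinv hsphere in
theorem integral_coord_mul_self_mul_coord_mul_coord (i k l : Fin p) :
    ∫ x, x i * x i * x k * x l ∂ν
      = ((if k = l then 1 else 0) + 2 * (if i = k then 1 else 0) * (if i = l then 1 else 0))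
        / (p * (p + 2)) := by
  rcases eq_or_ne k l with rfl | hkl
  · rcases eq_or_ne i k with rfl | hik
    · rw [show ∫ x, x i * x i * x i * x i ∂ν = ∫ x, x i ^ 4 ∂ν by congr 1; ext; ring,
        integral_coord_pow_four hinv hsphere]
      simp only [if_true]
      ring
    · rw [show ∫ x, x i * x i * x k * x k ∂ν = ∫ x, x i ^ 2 * x k ^ 2 ∂ν by congr 1; ext; ring,
        integral_coord_sq_mul_coord_sq hinv hsphere hik]
      simp [hik]
  · rcases eq_or_ne k i with rfl | hki
    · rw [show ∫ x, x k * x k * x k * x l ∂ν = ∫ x, x l * x k ^ 3 ∂ν by congr 1; ext; ring,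
        integral_coord_mul_eq_zero hinv l (by fun_prop) fun x => by simp [hkl]]
      simp [hkl]
    · rw [show ∫ x, x i * x i * x k * x l ∂ν = ∫ x, x k * (x i ^ 2 * x l) ∂ν by
          congr 1; ext; ring,
        integral_coord_mul_eq_zero hinv k (by fun_prop) fun x => by simp [hki.symm, hkl.symm]]
      simp [hki.symm, hkl]

include hinv hsphere in
theorem integral_coord_mul_coord_mul_coord_mul_coord (i j k l : Fin p) :
    ∫ x, x i * x j * x k * x l ∂ν
      = ((if i = j then 1 else 0) * (if k = l then 1 else 0)
          + (if i = k then 1 else 0) * (if j = l then 1 else 0)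
          + (if i = l then 1 else 0) * (if j = k then 1 else 0)) / (p * (p + 2)) := by
  rcases eq_or_ne i j with rfl | hij
  · rw [integral_coord_mul_self_mul_coord_mul_coord hinv hsphere]
    simp only [if_true, one_mul]
    ring
  rcases eq_or_ne i k with rfl | hik
  · rcases eq_or_ne j l with rfl | hjl
    · rw [show ∫ x, x i * x j * x i * x j ∂ν = ∫ x, x i ^ 2 * x j ^ 2 ∂ν by congr 1; ext; ring,
        integral_coord_sq_mul_coord_sq hinv hsphere hij]
      simp [hij]
    · rw [show ∫ x, x i * x j * x i * x l ∂ν = ∫ x, x j * (x i ^ 2 * x l) ∂ν by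
          congr 1; ext; ring,
        integral_coord_mul_eq_zero hinv j (by fun_prop) fun x => by simp [hij, hjl.symm]]
      simp [hij, hij.symm, hjl]
  rcases eq_or_ne i l with rfl | hil
  · rcases eq_or_ne j k with rfl | hjk
    · rw [show ∫ x, x i * x j * x j * x i ∂ν = ∫ x, x i ^ 2 * x j ^ 2 ∂ν by congr 1; ext; ring,
        integral_coord_sq_mul_coord_sq hinv hsphere hij]
      simp [hij]
    · rw [show ∫ x, x i * x j * x k * x i ∂ν = ∫ x, x j * (x i ^ 2 * x k) ∂ν by
          congr 1; ext; ring,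
        integral_coord_mul_eq_zero hinv j (by fun_prop) fun x => by simp [hij, hjk.symm]]
      simp [hij, hik, hjk]
  rw [show ∫ x, x i * x j * x k * x l ∂ν = ∫ x, x i * (x j * x k * x l) ∂ν by congr 1; ext; ring,
    integral_coord_mul_eq_zero hinv i (by fun_prop) fun x => by
      simp [hij.symm, hik.symm, hil.symm]]
  simp [hij, hik, hil]

include hinv hsphere in
theorem integral_coord_mul_coord (i j : Fin p) :
    ∫ x, x i * x j ∂ν = (if i = j then 1 else 0) / p := by
  rcases eq_or_ne i j with rfl | hij
  · simp [← sq, integral_coord_sq hinv hsphere]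
  · simp [integral_coord_mul_coord_of_ne hinv hij, hij]

include hinv hsphere in
theorem integral_dotProduct_mulVec (M : Matrix (Fin p) (Fin p) ℝ) :
    ∫ x, x ⬝ᵥ M *ᵥ x ∂ν = M.trace / p := by
  have h := integral_dotProduct_mulVec_mul (μ := ν) M (f := fun _ => 1) fun i j => by
    simpa using (by fun_prop : Continuous fun x : Fin p → ℝ => x i * x j)
      |>.integrable_of_ae_sum_sq_eq_one hsphere
  simp only [mul_one, integral_coord_mul_coord hinv hsphere] at h
  simp only [h, mul_div_assoc', ← Finset.sum_div, mul_ite, mul_one, mul_zero, Finset.sum_ite_eq,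
    Finset.mem_univ, if_true, trace, diag]

include hinv hsphere in
theorem integral_dotProduct_mulVec_mul_dotProduct_mulVec (M N : Matrix (Fin p) (Fin p) ℝ)
    (hN : Nᵀ = N) :
    ∫ x, (x ⬝ᵥ M *ᵥ x) * (x ⬝ᵥ N *ᵥ x) ∂ν
      = (M.trace * N.trace + 2 * (M * N).trace) / (p * (p + 2)) := by
  have hint {g : (Fin p → ℝ) → ℝ} (hg : Continuous g) : Integrable g ν :=
    hg.integrable_of_ae_sum_sq_eq_one hsphere
  have hinner (i j : Fin p) : ∫ x, x i * x j * (x ⬝ᵥ N *ᵥ x) ∂ν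
      = ((if i = j then N.trace else 0) + N i j + N j i) / (p * (p + 2)) := by
    rw [show ∫ x, x i * x j * (x ⬝ᵥ N *ᵥ x) ∂ν = ∫ x, (x ⬝ᵥ N *ᵥ x) * (x i * x j) ∂ν by
        congr 1; ext; ring,
      integral_dotProduct_mulVec_mul N fun k l => hint (by fun_prop)]
    simp only [← mul_assoc, integral_coord_mul_coord_mul_coord_mul_coord hinv hsphere]
    simp only [mul_div_assoc', ← Finset.sum_div]
    congr 1
    simp [mul_add, Finset.sum_add_distrib, mul_ite, Finset.sum_ite_eq, Finset.sum_ite_eq',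
      trace]
  rw [integral_dotProduct_mulVec_mul M fun i j => hint (by fun_prop)]
  have hsymm (i j : Fin p) : N j i = N i j := by rw [← transpose_apply N i j, hN]
  simp only [hinner, mul_div_assoc', ← Finset.sum_div]
  congr 1
  simp only [mul_add, Finset.sum_add_distrib, mul_ite, mul_zero, Finset.sum_ite_eq,
    Finset.mem_univ, if_true, trace, diag, mul_apply, hsymm, Finset.sum_mul]
  ring

end InvariantMeasure

theorem Matrix.smul_mulVec_dotProduct_mulVec_smul_mulVec {n R : Type*} [Fintype n] [CommRing R]
    (r : R) (S P : Matrix n n R) (v : n → R) :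
    (r • (S *ᵥ v)) ⬝ᵥ P *ᵥ (r • (S *ᵥ v)) = r ^ 2 * (v ⬝ᵥ (Sᵀ * P * S) *ᵥ v) := by
  rw [mulVec_smul, dotProduct_smul, smul_dotProduct, mulVec_mulVec, dotProduct_mulVec,
    vecMul_mulVec, ← dotProduct_mulVec, smul_eq_mul, smul_eq_mul, ← mul_assoc, ← sq,
    ← Matrix.mul_assoc]

theorem integral_comp_mul_comp_eq_mul_integral_map {Ω α : Type*} [MeasurableSpace Ω]
    [MeasurableSpace α] {μ : Measure Ω} {u : Ω → α} {R : Ω → ℝ} (hindep : IndepFun u R μ)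
    (hu : Measurable u) (hR : Measurable R) {f : ℝ → ℝ} {g : α → ℝ} (hf : Measurable f)
    (hg : Measurable g) :
    ∫ ω, f (R ω) * g (u ω) ∂μ = (∫ ω, f (R ω) ∂μ) * ∫ x, g x ∂(μ.map u) := by
  rw [integral_map hu.aemeasurable hg.aestronglyMeasurable]
  exact (hindep.symm.comp hf hg).integral_fun_mul_eq_mul_integral
    (hf.comp hR).aestronglyMeasurable (hg.comp hu).aestronglyMeasurable

theorem Matrix.trace_sandwich_mul_sandwich {n R : Type*} [Fintype n] [CommRing R]
    (S A B : Matrix n n R) : (S * A * S * (S * B * S)).trace = (S * S * A * (S * S) * B).trace := by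
  rw [show S * A * S * (S * B * S) = S * A * (S * S) * B * S by simp only [Matrix.mul_assoc],
    trace_mul_comm]
  simp only [Matrix.mul_assoc]

section IndepRadius

variable {Ω : Type*} [MeasurableSpace Ω] {μ : Measure Ω} [IsProbabilityMeasure μ] {p : ℕ}
  {u : Ω → Fin p → ℝ} {R : Ω → ℝ} {X : Ω → Fin p → ℝ} {S : Matrix (Fin p) (Fin p) ℝ}
  (hindep : IndepFun u R μ) (hu : Measurable u) (hR : Measurable R)
  (hinv : ∀ O ∈ orthogonalGroup (Fin p) ℝ, (μ.map u).map (O *ᵥ ·) = μ.map u)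
  (hsphere : ∀ᵐ x ∂(μ.map u), ∑ i, x i ^ 2 = 1) (hX : ∀ ω, X ω = R ω • (S *ᵥ u ω))

include hindep hu hR hinv hsphere hX in
theorem integral_dotProduct_mulVec_of_indepFun (P : Matrix (Fin p) (Fin p) ℝ) :
    ∫ ω, X ω ⬝ᵥ P *ᵥ X ω ∂μ = (∫ ω, R ω ^ 2 ∂μ) * ((Sᵀ * P * S).trace / p) := by
  have := Measure.isProbabilityMeasure_map (μ := μ) hu.aemeasurable
  simp only [hX, smul_mulVec_dotProduct_mulVec_smul_mulVec]
  rw [integral_comp_mul_comp_eq_mul_integral_map hindep hu hR (f := (· ^ 2))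
    (g := fun x => x ⬝ᵥ (Sᵀ * P * S) *ᵥ x) (by fun_prop) (by fun_prop),
    integral_dotProduct_mulVec hinv hsphere]

include hindep hu hR hinv hsphere hX in
theorem integral_dotProduct_mulVec_mul_dotProduct_mulVec_of_indepFun
    (A B : Matrix (Fin p) (Fin p) ℝ) (hB : Bᵀ = B) :
    ∫ ω, (X ω ⬝ᵥ A *ᵥ X ω) * (X ω ⬝ᵥ B *ᵥ X ω) ∂μ = (∫ ω, R ω ^ 4 ∂μ)
      * (((Sᵀ * A * S).trace * (Sᵀ * B * S).trace + 2 * (Sᵀ * A * S * (Sᵀ * B * S)).trace)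
        / (p * (p + 2))) := by
  have := Measure.isProbabilityMeasure_map (μ := μ) hu.aemeasurable
  have hN : (Sᵀ * B * S)ᵀ = Sᵀ * B * S := by
    rw [transpose_mul, transpose_mul, transpose_transpose, hB, Matrix.mul_assoc]
  have hprod (ω : Ω) : (X ω ⬝ᵥ A *ᵥ X ω) * (X ω ⬝ᵥ B *ᵥ X ω)
      = R ω ^ 4 * ((u ω ⬝ᵥ (Sᵀ * A * S) *ᵥ u ω) * (u ω ⬝ᵥ (Sᵀ * B * S) *ᵥ u ω)) := by
    rw [hX, smul_mulVec_dotProduct_mulVec_smul_mulVec, smul_mulVec_dotProduct_mulVec_smul_mulVec]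
    ring
  simp only [hprod]
  rw [integral_comp_mul_comp_eq_mul_integral_map hindep hu hR (f := (· ^ 4))
    (g := fun x => (x ⬝ᵥ (Sᵀ * A * S) *ᵥ x) * (x ⬝ᵥ (Sᵀ * B * S) *ᵥ x)) (by fun_prop)
    (by fun_prop), integral_dotProduct_mulVec_mul_dotProduct_mulVec hinv hsphere _ _ hN]

end IndepRadius

theorem stmt2_general
    {Ω : Type*} [MeasurableSpace Ω] (μ : Measure Ω) [IsProbabilityMeasure μ]
    {p : ℕ}
    (Sg : Matrix (Fin p) (Fin p) ℝ) (hSg : Sg.PosDef)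
    (u : Ω → Fin p → ℝ) (hu : Measurable u)
    (husphere : ∀ᵐ ω ∂μ, ∑ i, (u ω i) ^ 2 = 1)
    (hurot : ∀ O : Matrix.orthogonalGroup (Fin p) ℝ,
      Measure.map (fun ω => (O : Matrix (Fin p) (Fin p) ℝ) *ᵥ u ω) μ = Measure.map u μ)
    (R : Ω → ℝ) (hR : Measurable R)
    (hindep : IndepFun u R μ)
    (hR2 : ∫ ω, (R ω) ^ 2 ∂μ = p)
    (X : Ω → Fin p → ℝ)
    (hXdef : ∀ ω, X ω = R ω • (CFC.sqrt Sg *ᵥ u ω))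
    (A B : Matrix (Fin p) (Fin p) ℝ) (hB : B.IsHermitian) :
    (1 / 4 : ℝ) * ((∫ ω, (X ω ⬝ᵥ A *ᵥ X ω) * (X ω ⬝ᵥ B *ᵥ X ω) ∂μ)
        - (∫ ω, X ω ⬝ᵥ A *ᵥ X ω ∂μ) * (∫ ω, X ω ⬝ᵥ B *ᵥ X ω ∂μ))
      = (1 / 2 : ℝ) * (Sg * A * Sg * B).trace
        + ((∫ ω, (R ω) ^ 4 ∂μ) / (p * (p + 2)) - 1)
          * ((1 / 2 : ℝ) * (Sg * A * Sg * B).trace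
              + (1 / 4 : ℝ) * (Sg * A).trace * (Sg * B).trace) := by
  set S := CFC.sqrt Sg
  have hS : Sᵀ = S := (conjTranspose_eq_transpose_of_trivial S).symm.trans
    (CFC.sqrt_nonneg Sg).isSelfAdjoint
  have hSS : S * S = Sg := CFC.sqrt_mul_sqrt_self Sg hSg.posSemidef.nonneg
  have hinv : ∀ O ∈ orthogonalGroup (Fin p) ℝ, (μ.map u).map (O *ᵥ ·) = μ.map u := fun O hO => by
    rw [Measure.map_map (by fun_prop) hu]
    exact hurot ⟨O, hO⟩
  have hsphere : ∀ᵐ x ∂(μ.map u), ∑ i, x i ^ 2 = 1 :=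
    (ae_map_iff hu.aemeasurable (measurableSet_eq_fun (by fun_prop) measurable_const)).2 husphere
  have := Measure.isProbabilityMeasure_map (μ := μ) hu.aemeasurable
  have hp := ne_zero_of_ae_sum_sq_eq_one hsphere
  have hmean (P : Matrix (Fin p) (Fin p) ℝ) : ∫ ω, X ω ⬝ᵥ P *ᵥ X ω ∂μ = (Sg * P).trace := by
    rw [integral_dotProduct_mulVec_of_indepFun hindep hu hR hinv hsphere hXdef, hS, hR2,
      trace_mul_cycle, hSS]
    field_simp
  rw [hmean, hmean, integral_dotProduct_mulVec_mul_dotProduct_mulVec_of_indepFun hindep hu hR hinv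
    hsphere hXdef A B ((conjTranspose_eq_transpose_of_trivial B).symm.trans hB), hS,
    trace_mul_cycle S A S, trace_mul_cycle S B S, trace_sandwich_mul_sandwich, hSS]
  ring

/-- Let `X = Σ^{1/2} u R` be elliptical with `u` uniform on the sphere,
`R ≥ 0` independent of `u`, `E[R²] = p` and `E[R⁴] < ∞`. Then for all symmetric `A`, `B`:
`(1/4)·Cov(XᵀAX, XᵀBX) = (1/2)tr(ΣAΣB) + (E[R⁴]/(p(p+2)) − 1)·((1/2)tr(ΣAΣB) + (1/4)tr(ΣA)tr(ΣB))`. -/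
theorem stmt2
    {Ω : Type*} [MeasurableSpace Ω] (μ : Measure Ω) [IsProbabilityMeasure μ]
    {p : ℕ} (hp : 2 ≤ p)
    (Sg : Matrix (Fin p) (Fin p) ℝ) (hSg : Sg.PosDef)
    (u : Ω → Fin p → ℝ) (hu : Measurable u)
    (husphere : ∀ᵐ ω ∂μ, ∑ i, (u ω i) ^ 2 = 1)
    (hurot : ∀ O : Matrix.orthogonalGroup (Fin p) ℝ,
      Measure.map (fun ω => (O : Matrix (Fin p) (Fin p) ℝ) *ᵥ u ω) μ = Measure.map u μ)
    (R : Ω → ℝ) (hR : Measurable R) (hRpos : ∀ ω, 0 ≤ R ω)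
    (hindep : IndepFun u R μ)
    (hR2 : ∫ ω, (R ω) ^ 2 ∂μ = p)
    (hR4 : Integrable (fun ω => (R ω) ^ 4) μ)
    (X : Ω → Fin p → ℝ)
    (hXdef : ∀ ω, X ω = R ω • (CFC.sqrt Sg *ᵥ u ω))
    (A B : Matrix (Fin p) (Fin p) ℝ) (hA : A.IsHermitian) (hB : B.IsHermitian) :
    (1 / 4 : ℝ) * ((∫ ω, (X ω ⬝ᵥ A *ᵥ X ω) * (X ω ⬝ᵥ B *ᵥ X ω) ∂μ)
        - (∫ ω, X ω ⬝ᵥ A *ᵥ X ω ∂μ) * (∫ ω, X ω ⬝ᵥ B *ᵥ X ω ∂μ))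
      = (1 / 2 : ℝ) * (Sg * A * Sg * B).trace
        + ((∫ ω, (R ω) ^ 4 ∂μ) / (p * (p + 2)) - 1)
          * ((1 / 2 : ℝ) * (Sg * A * Sg * B).trace
              + (1 / 4 : ℝ) * (Sg * A).trace * (Sg * B).trace) :=
  stmt2_general μ Sg hSg u hu husphere hurot R hR hindep hR2 X hXdef A B hB
end

section
/- Let p ≥ 1, let Σ be a positive definite p×p matrix, and let c be a real number with 0 < c < p. Then the p²×p² matrix (1/2)(Σ⊗Σ) − (c/(p(p+2)))·( Σ⊗Σ + (1/2)·vec(Σ)vec(Σ)ᵀ ) is positive definite. (This establishes the positive definiteness of the Hessian C of the t-loss risk, since 0 < E[ξ_R] < p; the proof identifies the eigenvalues of Q = (1/2)I_{p²} − (c/(p(p+2)))(I_{p²} + (1/2)vec(I_p)vec(I_p)ᵀ) as 1/2 − c/(p(p+2)) on the orthogonal complement of vec(I_p) and 1/2 − c/(2p) on the span of vec(I_p).) -/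
/-!
Write `M = Σ ⊗ Σ` and `v = vec Σ`. The matrix equals `(1/2 - a) M - (a/2) v vᵀ` with
`a = c / (p (p + 2))`. Factoring `Σ = Bᵀ B` gives `M = K Kᵀ` and `v = K vec(I)` for
`K = Bᵀ ⊗ Bᵀ`, so Cauchy–Schwarz yields `(vᵀ x)² ≤ |vec I|² · xᵀ M x = p · xᵀ M x`. Hence the
quadratic form is at least `(1/2 - a - a p / 2) · xᵀ M x = (p - c) / (2 p) · xᵀ M x > 0`.
-/

open Matrix
open scoped Kronecker

/-- Column-stacking vectorization of a `p × p` matrix, indexed by pairs. -/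
noncomputable def mvec {p : ℕ} (A : Matrix (Fin p) (Fin p) ℝ) : Fin p × Fin p → ℝ :=
  fun ij => A ij.1 ij.2

open scoped MatrixOrder

lemma sq_dotProduct_le {n : Type*} [Fintype n] (v w : n → ℝ) :
    (v ⬝ᵥ w) ^ 2 ≤ (v ⬝ᵥ v) * (w ⬝ᵥ w) := by
  simpa only [dotProduct, ← pow_two] using Finset.sum_mul_sq_le_sq_mul_sq Finset.univ v w

lemma sq_mulVec_dotProduct_le {m n : Type*} [Fintype m] [Fintype n] (K : Matrix m n ℝ)
    (w : n → ℝ) (x : m → ℝ) :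
    ((K *ᵥ w) ⬝ᵥ x) ^ 2 ≤ (w ⬝ᵥ w) * (x ⬝ᵥ ((K * Kᵀ) *ᵥ x)) := by
  have hx : x ⬝ᵥ ((K * Kᵀ) *ᵥ x) = (Kᵀ *ᵥ x) ⬝ᵥ (Kᵀ *ᵥ x) := by
    rw [← mulVec_mulVec, dotProduct_mulVec, ← mulVec_transpose]
  rw [hx, dotProduct_comm, dotProduct_mulVec, ← mulVec_transpose, dotProduct_comm]
  exact sq_dotProduct_le w _

lemma kronecker_mulVec_mvec {p : ℕ} (A C X : Matrix (Fin p) (Fin p) ℝ) :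
    (A ⊗ₖ C) *ᵥ mvec X = mvec (A * X * Cᵀ) := by
  ext ⟨i, j⟩
  simp only [mulVec, dotProduct, Fintype.sum_prod_type, kroneckerMap_apply, mvec, mul_apply,
    transpose_apply, Finset.sum_mul]
  rw [Finset.sum_comm]
  exact Finset.sum_congr rfl fun k _ => Finset.sum_congr rfl fun l _ => by ring

lemma mvec_one_dotProduct_mvec_one {p : ℕ} :
    mvec (1 : Matrix (Fin p) (Fin p) ℝ) ⬝ᵥ mvec 1 = p := by
  simp [dotProduct, mvec, Fintype.sum_prod_type, one_apply]

lemma sq_mvec_dotProduct_le {p : ℕ} {Sg : Matrix (Fin p) (Fin p) ℝ} (hSg : Sg.PosSemidef)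
    (x : Fin p × Fin p → ℝ) :
    (mvec Sg ⬝ᵥ x) ^ 2 ≤ p * (x ⬝ᵥ ((Sg ⊗ₖ Sg) *ᵥ x)) := by
  obtain ⟨B, rfl⟩ := CStarAlgebra.nonneg_iff_eq_star_mul_self.mp hSg.nonneg
  rw [star_eq_conjTranspose, conjTranspose_eq_transpose_of_trivial]
  have hvec : mvec (Bᵀ * B) = (Bᵀ ⊗ₖ Bᵀ) *ᵥ mvec 1 := by
    rw [kronecker_mulVec_mvec, mul_one, transpose_transpose]
  have hprod : (Bᵀ * B) ⊗ₖ (Bᵀ * B) = (Bᵀ ⊗ₖ Bᵀ) * (Bᵀ ⊗ₖ Bᵀ)ᵀ := by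
    rw [← kroneckerMap_transpose, transpose_transpose, mul_kronecker_mul]
  rw [hvec, hprod, ← mvec_one_dotProduct_mvec_one]
  exact sq_mulVec_dotProduct_le _ _ _

lemma Matrix.PosDef.smul_sub_smul_vecMulVec {n : Type*} [Fintype n] {M : Matrix n n ℝ}
    (hM : M.PosDef) {v : n → ℝ} {lam α β : ℝ} (hv : ∀ x, (v ⬝ᵥ x) ^ 2 ≤ lam * (x ⬝ᵥ (M *ᵥ x)))
    (hβ : 0 ≤ β) (hlam : β * lam < α) :
    (α • M - β • vecMulVec v v).PosDef := by
  have hvv : (vecMulVec v v).IsHermitian := by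
    simpa using (posSemidef_vecMulVec_self_star v).isHermitian
  refine posDef_iff_dotProduct_mulVec.2 ⟨?_, fun x hx => ?_⟩
  · exact (hM.isHermitian.smul (.all α)).sub (hvv.smul (.all β))
  have hMx : 0 < x ⬝ᵥ (M *ᵥ x) := by simpa using hM.dotProduct_mulVec_pos hx
  have hform : star x ⬝ᵥ ((α • M - β • vecMulVec v v) *ᵥ x)
      = α * (x ⬝ᵥ (M *ᵥ x)) - β * (v ⬝ᵥ x) ^ 2 := by
    simp [sub_mulVec, smul_mulVec, vecMulVec_mulVec, dotProduct_comm x v, pow_two]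
  rw [hform]
  nlinarith [mul_le_mul_of_nonneg_left (hv x) hβ]

theorem stmt11_general
    {p : ℕ}
    (Sg : Matrix (Fin p) (Fin p) ℝ) (hSg : Sg.PosDef)
    (c : ℝ) (hc0 : 0 < c) (hcp : c < p) :
    ((1 / 2 : ℝ) • (Sg ⊗ₖ Sg)
      - (c / (p * (p + 2))) • ((Sg ⊗ₖ Sg)
          + (1 / 2 : ℝ) • Matrix.vecMulVec (mvec Sg) (mvec Sg))).PosDef := by
  set a := c / (p * (p + 2)) with ha
  have hp : (0 : ℝ) < p := hc0.trans hcp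
  have hsplit : (1 / 2 : ℝ) • (Sg ⊗ₖ Sg)
        - a • ((Sg ⊗ₖ Sg) + (1 / 2 : ℝ) • vecMulVec (mvec Sg) (mvec Sg))
      = (1 / 2 - a) • (Sg ⊗ₖ Sg) - (a / 2) • vecMulVec (mvec Sg) (mvec Sg) := by
    module
  have hmargin : 1 / 2 - a - a / 2 * p = (p - c) / (2 * p) := by
    rw [ha]
    field_simp
    ring
  rw [hsplit]
  refine (hSg.kronecker hSg).smul_sub_smul_vecMulVec (sq_mvec_dotProduct_le hSg.posSemidef)
    (by positivity) ?_
  have : 0 < (p - c) / (2 * p) := div_pos (sub_pos.2 hcp) (by positivity)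
  linarith

/-- For `Σ` positive definite and `0 < c < p`, the `p²×p²` matrix
`(1/2)(Σ⊗Σ) − (c/(p(p+2)))·(Σ⊗Σ + (1/2)vec(Σ)vec(Σ)ᵀ)` is positive definite.
This gives the positive definiteness of the Hessian `C` of the `t`-loss risk,
since `0 < E[ξ_R] < p`. -/
theorem stmt11
    {p : ℕ} (hp : 1 ≤ p)
    (Sg : Matrix (Fin p) (Fin p) ℝ) (hSg : Sg.PosDef)
    (c : ℝ) (hc0 : 0 < c) (hcp : c < p) :
    ((1 / 2 : ℝ) • (Sg ⊗ₖ Sg)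
      - (c / (p * (p + 2))) • ((Sg ⊗ₖ Sg)
          + (1 / 2 : ℝ) • Matrix.vecMulVec (mvec Sg) (mvec Sg))).PosDef :=
  stmt11_general Sg hSg c hc0 hcp
end

section
/- Let p ≥ 1, ν ≥ 1, n ≥ 1, let x₁,…,x_n ∈ ℝ^p, let δ > 0, and let Θ be a positive definite p×p matrix with largest eigenvalue λ₁ and a unit eigenvector v₁ satisfying Θv₁ = λ₁v₁ and ‖v₁‖ = 1. Set S := (1/n)·#{ i ∈ {1,…,n} : |v₁ᵀx_i| ≥ δ }. Then −(1/2)·log det Θ + ((ν+p)/(2n))·Σ_{i=1}^n log(ν + x_iᵀΘx_i) ≥ ( ((ν+p)/2)·S − p/2 )·log λ₁ + ((ν+p)/2)·S·log(δ²). -/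
/-!
Every eigenvalue of `Θ` is at most `λ₁`, so `log det Θ ≤ p log λ₁`. Since `v₁` is a unit
eigenvector, `0 ≤ (x - αv₁)ᵀΘ(x - αv₁) = xᵀΘx - λ₁α²` for `α = v₁ᵀx`, hence each of the `nS`
terms with `|v₁ᵀxᵢ| ≥ δ` contributes at least `log λ₁ + log δ²` to the sum of logarithms, while
the remaining terms are nonnegative because `ν ≥ 1`.
-/

open Matrix

namespace Matrix

variable {m : Type*} [Fintype m] {Θ : Matrix m m ℝ} {lam : ℝ}

theorem PosSemidef.mul_sq_dotProduct_le_dotProduct_mulVec (hΘ : Θ.PosSemidef) {v : m → ℝ}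
    (heig : Θ *ᵥ v = lam • v) (hunit : v ⬝ᵥ v = 1) (y : m → ℝ) :
    lam * (v ⬝ᵥ y) ^ 2 ≤ y ⬝ᵥ Θ *ᵥ y := by
  set α := v ⬝ᵥ y
  have hv_mulVec : v ⬝ᵥ Θ *ᵥ y = lam * α := by
    rw [dotProduct_mulVec, ← mulVec_transpose, show Θᵀ = Θ from hΘ.isHermitian, heig,
      smul_dotProduct, smul_eq_mul]
  have hexpand : (y - α • v) ⬝ᵥ Θ *ᵥ (y - α • v) = y ⬝ᵥ Θ *ᵥ y - lam * α ^ 2 := by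
    simp only [mulVec_sub, mulVec_smul, sub_dotProduct, dotProduct_sub, smul_dotProduct,
      dotProduct_smul, hv_mulVec, heig, hunit, dotProduct_comm y v, smul_eq_mul]
    ring
  have hnonneg : 0 ≤ (y - α • v) ⬝ᵥ Θ *ᵥ (y - α • v) := by
    simpa using hΘ.dotProduct_mulVec_nonneg (y - α • v)
  linarith

variable [DecidableEq m]

theorem IsHermitian.eigenvalues_le_of_forall_dotProduct_mulVec_le (hΘ : Θ.IsHermitian)
    (hmax : ∀ y : m → ℝ, y ⬝ᵥ Θ *ᵥ y ≤ lam * (y ⬝ᵥ y)) (j : m) :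
    hΘ.eigenvalues j ≤ lam := by
  set u := hΘ.eigenvectorBasis j
  have hunit : ⇑u ⬝ᵥ ⇑u = 1 := by
    have h := EuclideanSpace.inner_eq_star_dotProduct u u
    rw [real_inner_self_eq_norm_sq, hΘ.eigenvectorBasis.orthonormal.1 j, one_pow] at h
    simpa [dotProduct_comm] using h.symm
  simpa [hΘ.eigenvalues_eq j, hunit] using hmax u

theorem PosSemidef.det_le_pow_of_forall_dotProduct_mulVec_le (hΘ : Θ.PosSemidef)
    (hmax : ∀ y : m → ℝ, y ⬝ᵥ Θ *ᵥ y ≤ lam * (y ⬝ᵥ y)) :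
    Θ.det ≤ lam ^ Fintype.card m := by
  rw [hΘ.isHermitian.det_eq_prod_eigenvalues, Fintype.card, ← Finset.prod_const]
  exact Finset.prod_le_prod (fun j _ ↦ hΘ.eigenvalues_nonneg j)
    fun j _ ↦ hΘ.isHermitian.eigenvalues_le_of_forall_dotProduct_mulVec_le hmax j

end Matrix

namespace Finset

theorem card_filter_nsmul_le_sum {ι M : Type*} [AddCommMonoid M] [PartialOrder M]
    [IsOrderedAddMonoid M] (s : Finset ι) (P : ι → Prop) [DecidablePred P] (f : ι → M) (c : M)
    (hP : ∀ i ∈ s, P i → c ≤ f i) (hnP : ∀ i ∈ s, ¬P i → 0 ≤ f i) :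
    #(s.filter P) • c ≤ ∑ i ∈ s, f i :=
  calc #(s.filter P) • c ≤ ∑ i ∈ s.filter P, f i :=
        card_nsmul_le_sum _ _ _ fun i hi ↦ hP i (mem_filter.1 hi).1 (mem_filter.1 hi).2
    _ ≤ ∑ i ∈ s, f i :=
        sum_le_sum_of_subset_of_nonneg (filter_subset P s) fun i hi hiP ↦
          hnP i hi fun h ↦ hiP (mem_filter.2 ⟨hi, h⟩)

end Finset

theorem Real.log_add_log_sq_le_log_add {lam δ a q ν : ℝ} (hlam : 0 < lam) (hδ : 0 < δ)
    (hν : 0 ≤ ν) (hδa : δ ≤ |a|) (hq : lam * a ^ 2 ≤ q) :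
    Real.log lam + Real.log (δ ^ 2) ≤ Real.log (ν + q) := by
  have hδa2 : δ ^ 2 ≤ a ^ 2 := by simpa only [sq_abs] using pow_le_pow_left₀ hδ.le hδa 2
  rw [← Real.log_mul hlam.ne' (by positivity)]
  exact Real.log_le_log (by positivity) (by nlinarith)

theorem stmt18_general
    {p n : ℕ} (ν : ℝ) (hν : 1 ≤ ν)
    (x : Fin n → Fin p → ℝ) (δ : ℝ) (hδ : 0 < δ)
    (Θ : Matrix (Fin p) (Fin p) ℝ) (hΘ : Θ.PosDef)
    (lam1 : ℝ) (v1 : Fin p → ℝ)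
    (heig : Θ *ᵥ v1 = lam1 • v1) (hunit : ∑ i, (v1 i) ^ 2 = 1)
    (hmax : ∀ y : Fin p → ℝ, y ⬝ᵥ Θ *ᵥ y ≤ lam1 * (y ⬝ᵥ y)) :
    -(1 / 2 : ℝ) * Real.log Θ.det
        + ((ν + p) / (2 * n)) * ∑ i, Real.log (ν + x i ⬝ᵥ Θ *ᵥ x i)
      ≥ (((ν + p) / 2) * (((Finset.univ.filter fun i : Fin n => δ ≤ |v1 ⬝ᵥ x i|).card : ℝ) / n)
            - p / 2) * Real.log lam1
        + ((ν + p) / 2) * (((Finset.univ.filter fun i : Fin n => δ ≤ |v1 ⬝ᵥ x i|).card : ℝ) / n)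
            * Real.log (δ ^ 2) := by
  set k := (Finset.univ.filter fun i : Fin n => δ ≤ |v1 ⬝ᵥ x i|).card
  have hv1 : v1 ⬝ᵥ v1 = 1 := by simpa only [dotProduct, sq] using hunit
  have hlam : 0 < lam1 := by
    have hv1ne : v1 ≠ 0 := fun h ↦ by simp [h] at hv1
    simpa [heig, hv1] using hΘ.dotProduct_mulVec_pos hv1ne
  have hquad (i : Fin n) : lam1 * (v1 ⬝ᵥ x i) ^ 2 ≤ x i ⬝ᵥ Θ *ᵥ x i :=
    hΘ.posSemidef.mul_sq_dotProduct_le_dotProduct_mulVec heig hv1 (x i)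
  have hlogdet : Real.log Θ.det ≤ p * Real.log lam1 := by
    simpa using Real.log_le_log hΘ.det_pos
      (hΘ.posSemidef.det_le_pow_of_forall_dotProduct_mulVec_le hmax)
  have hsum : k * (Real.log lam1 + Real.log (δ ^ 2)) ≤ ∑ i, Real.log (ν + x i ⬝ᵥ Θ *ᵥ x i) := by
    rw [← nsmul_eq_mul]
    refine Finset.card_filter_nsmul_le_sum _ (fun i ↦ δ ≤ |v1 ⬝ᵥ x i|) _ _
      (fun i _ hi ↦ ?_) fun i _ _ ↦ ?_
    · exact Real.log_add_log_sq_le_log_add hlam hδ (by linarith) hi (hquad i)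
    · exact Real.log_nonneg (by nlinarith [hquad i, sq_nonneg (v1 ⬝ᵥ x i)])
  have hcoef : 0 ≤ (ν + p) / (2 * n) := by positivity
  calc _ = -(1 / 2 : ℝ) * (p * Real.log lam1)
        + (ν + p) / (2 * n) * (k * (Real.log lam1 + Real.log (δ ^ 2))) := by ring
    _ ≤ _ := add_le_add (by linarith) (mul_le_mul_of_nonneg_left hsum hcoef)

/-- Deterministic coercivity inequality for the empirical `t`-loss:
if `Θ` is positive definite with largest eigenvalue `λ₁` (characterized by the Rayleigh
bound) and unit eigenvector `v₁`, `δ > 0`, and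
`S = (1/n)·#{i : |v₁ᵀx_i| ≥ δ}`, then
`−(1/2)log det Θ + ((ν+p)/(2n))·Σᵢ log(ν + xᵢᵀΘxᵢ)
  ≥ (((ν+p)/2)·S − p/2)·log λ₁ + ((ν+p)/2)·S·log(δ²)`. -/
theorem stmt18
    {p n : ℕ} (hp : 1 ≤ p) (hn : 1 ≤ n) (ν : ℝ) (hν : 1 ≤ ν)
    (x : Fin n → Fin p → ℝ) (δ : ℝ) (hδ : 0 < δ)
    (Θ : Matrix (Fin p) (Fin p) ℝ) (hΘ : Θ.PosDef)
    (lam1 : ℝ) (v1 : Fin p → ℝ)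
    (heig : Θ *ᵥ v1 = lam1 • v1) (hunit : ∑ i, (v1 i) ^ 2 = 1)
    (hmax : ∀ y : Fin p → ℝ, y ⬝ᵥ Θ *ᵥ y ≤ lam1 * (y ⬝ᵥ y)) :
    -(1 / 2 : ℝ) * Real.log Θ.det
        + ((ν + p) / (2 * n)) * ∑ i, Real.log (ν + x i ⬝ᵥ Θ *ᵥ x i)
      ≥ (((ν + p) / 2) * (((Finset.univ.filter fun i : Fin n => δ ≤ |v1 ⬝ᵥ x i|).card : ℝ) / n)
            - p / 2) * Real.log lam1
        + ((ν + p) / 2) * (((Finset.univ.filter fun i : Fin n => δ ≤ |v1 ⬝ᵥ x i|).card : ℝ) / n)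
            * Real.log (δ ^ 2) :=
  stmt18_general ν hν x δ hδ Θ hΘ lam1 v1 heig hunit hmax
end
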